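/- arXiv:2205.05214 — 7 statements merged into one kernel-verified Lean document; each statement's English description precedes it below -/
import Mathlib

section
/- (Proposition 1, inequality part.) Let (X, μ) and (Z, ν) be σ-finite measure spaces, let p* be a probability density on X, let q be a conditional density on Z given X, let p_θ be a probability density on X × Z (with respect to μ ⊗ ν) with p_θ > 0 (μ⊗ν)-a.e., and let p_η : X → ℝ be measurable with p_η > 0 μ-a.e. Let f : ℝ → ℝ be convex on [0, ∞) with f(1) = 0, differentiable on (0, ∞), with Fenchel conjugate f*. Assume q > 0 (μ⊗ν)-a.e. and that the three functions (x,z) ↦ p*(x)·q(x,z)·f'(p_η(x)q(x,z)/p_θ(x,z)), (x,z) ↦ p_θ(x,z)·f*(f'(p_η(x)q(x,z)/p_θ(x,z))), and (x,z) ↦ p_θ(x,z)·f(p*(x)q(x,z)/p_θ(x,z)) are integrable with respect to μ ⊗ ν. Then ∫ p*(x)·q(x,z)·f'(p_η(x)q(x,z)/p_θ(x,z)) d(μ⊗ν) − ∫ p_θ(x,z)·f*(f'(p_η(x)q(x,z)/p_θ(x,z))) d(μ⊗ν) ≤ ∫ p_θ(x,z)·f(p*(x)q(x,z)/p_θ(x,z))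 d(μ⊗ν). -/
open MeasureTheory

/-- The Fenchel conjugate `f*(u) = sup_{x ≥ 0} (u·x − f(x))` of a function
`f : ℝ → ℝ` restricted to the nonnegative reals. -/
noncomputable def fenchelConj (f : ℝ → ℝ) (u : ℝ) : ℝ :=
  sSup {v : ℝ | ∃ x ≥ (0 : ℝ), v = u * x - f x}

/-- Tangent line inequality for a convex function. -/
lemma tangent_aux {f : ℝ → ℝ} (hconv : ConvexOn ℝ (Set.Ici (0 : ℝ)) f)
    (hdiff : DifferentiableOn ℝ f (Set.Ioi (0 : ℝ))) {s y : ℝ} (hs : 0 < s) (hy : 0 ≤ y) :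
    deriv f s * y - f y ≤ deriv f s * s - f s := by
  have hd : DifferentiableAt ℝ f s :=
    (hdiff s hs).differentiableAt (isOpen_Ioi.mem_nhds hs)
  rcases lt_trichotomy y s with h | h | h
  · have h1 := hconv.slope_le_deriv hy (le_of_lt hs) h hd
    rw [slope_def_field, div_le_iff₀ (by linarith)] at h1
    nlinarith
  · simp [h]
  · have h1 := hconv.deriv_le_slope (le_of_lt hs) hy h hd
    rw [slope_def_field, le_div_iff₀ (by linarith)] at h1
    nlinarith

/-- Fenchel–Young inequality specialised to `u = f'(s)`. -/
lemma fenchel_aux {f : ℝ → ℝ} (hconv : ConvexOn ℝ (Set.Ici (0 : ℝ)) f)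
    (hdiff : DifferentiableOn ℝ f (Set.Ioi (0 : ℝ))) {s t : ℝ} (hs : 0 < s) (ht : 0 ≤ t) :
    deriv f s * t - fenchelConj f (deriv f s) ≤ f t := by
  set u := deriv f s with hu
  have hbdd : BddAbove {v : ℝ | ∃ x ≥ (0 : ℝ), v = u * x - f x} := by
    refine ⟨u * s - f s, ?_⟩
    rintro v ⟨x, hx, rfl⟩
    exact tangent_aux hconv hdiff hs hx
  have hmem : u * t - f t ∈ {v : ℝ | ∃ x ≥ (0 : ℝ), v = u * x - f x} := ⟨t, ht, rfl⟩
  have := le_csSup hbdd hmem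
  unfold fenchelConj
  linarith

/-- Proposition 1, inequality part: the f-GM objective `L^M_f` is a lower bound
for the f-VAE objective `L^V_f = D_f(p* ⋉ q ‖ p_θ)`.  Here `pstar` is a probability density on
`X`, `q` a conditional density on `Z` given `X` (positive a.e.), `pθ` a positive-a.e.
probability density on `X × Z`, `pη` a positive-a.e. measurable density estimator on `X`,
and `f` is convex on `[0,∞)` with `f 1 = 0`, differentiable on `(0,∞)`. -/
theorem fGM_le_fVAE {X Z : Type*} [MeasurableSpace X] [MeasurableSpace Z]
    (μ : Measure X) (ν : Measure Z) [SigmaFinite μ] [SigmaFinite ν]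
    (pstar : X → ℝ) (q : X × Z → ℝ) (pθ : X × Z → ℝ) (pη : X → ℝ) (f : ℝ → ℝ)
    -- p* is a probability density on X
    (hpstar_meas : Measurable pstar) (hpstar_nonneg : ∀ x, 0 ≤ pstar x)
    (hpstar_int : ∫ x, pstar x ∂μ = 1)
    -- q is a conditional density on Z given X, positive (μ⊗ν)-a.e.
    (hq_meas : Measurable q) (hq_nonneg : ∀ w, 0 ≤ q w)
    (hq_cond : ∀ x, ∫ z, q (x, z) ∂ν = 1)
    (hq_pos : ∀ᵐ w ∂μ.prod ν, 0 < q w)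
    -- pθ is a probability density on X × Z, positive (μ⊗ν)-a.e.
    (hpθ_meas : Measurable pθ) (hpθ_nonneg : ∀ w, 0 ≤ pθ w)
    (hpθ_int : ∫ w, pθ w ∂μ.prod ν = 1)
    (hpθ_pos : ∀ᵐ w ∂μ.prod ν, 0 < pθ w)
    -- pη is measurable, positive μ-a.e.
    (hpη_meas : Measurable pη) (hpη_pos : ∀ᵐ x ∂μ, 0 < pη x)
    -- f is an f-divergence function, differentiable on (0, ∞)
    (hconv : ConvexOn ℝ (Set.Ici (0 : ℝ)) f) (hf1 : f 1 = 0)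
    (hdiff : DifferentiableOn ℝ f (Set.Ioi (0 : ℝ)))
    -- integrability of the three relevant integrands
    (hint1 : Integrable
      (fun w : X × Z => pstar w.1 * q w * deriv f (pη w.1 * q w / pθ w)) (μ.prod ν))
    (hint2 : Integrable
      (fun w : X × Z => pθ w * fenchelConj f (deriv f (pη w.1 * q w / pθ w))) (μ.prod ν))
    (hint3 : Integrable
      (fun w : X × Z => pθ w * f (pstar w.1 * q w / pθ w)) (μ.prod ν)) :
    (∫ w : X × Z, pstar w.1 * q w * deriv f (pη w.1 * q w / pθ w) ∂μ.prod ν)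
        - ∫ w : X × Z, pθ w * fenchelConj f (deriv f (pη w.1 * q w / pθ w)) ∂μ.prod ν
      ≤ ∫ w : X × Z, pθ w * f (pstar w.1 * q w / pθ w) ∂μ.prod ν := by
  -- lift positivity of pη to the product measure
  have hpη_prod : ∀ᵐ w ∂μ.prod ν, 0 < pη w.1 := by
    rw [ae_iff] at hpη_pos ⊢
    refine measure_mono_null (fun w hw => ?_)
      (show (μ.prod ν) ({x | ¬ 0 < pη x} ×ˢ (Set.univ : Set Z)) = 0 by
        rw [Measure.prod_prod, hpη_pos, zero_mul])
    exact ⟨hw, Set.mem_univ _⟩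
  have hae : ∀ᵐ w ∂μ.prod ν,
      pstar w.1 * q w * deriv f (pη w.1 * q w / pθ w)
        - pθ w * fenchelConj f (deriv f (pη w.1 * q w / pθ w))
      ≤ pθ w * f (pstar w.1 * q w / pθ w) := by
    filter_upwards [hq_pos, hpθ_pos, hpη_prod] with w hq hpθ hpη
    have hs : 0 < pη w.1 * q w / pθ w := div_pos (mul_pos hpη hq) hpθ
    have ht : 0 ≤ pstar w.1 * q w / pθ w :=
      div_nonneg (mul_nonneg (hpstar_nonneg _) (hq_nonneg _)) hpθ.le
    have key := fenchel_aux hconv hdiff hs ht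
    have hmul := mul_le_mul_of_nonneg_left key hpθ.le
    have hθt : pθ w * (pstar w.1 * q w / pθ w) = pstar w.1 * q w :=
      mul_div_cancel₀ _ (ne_of_gt hpθ)
    calc pstar w.1 * q w * deriv f (pη w.1 * q w / pθ w)
        - pθ w * fenchelConj f (deriv f (pη w.1 * q w / pθ w))
        = pθ w * (deriv f (pη w.1 * q w / pθ w) * (pstar w.1 * q w / pθ w)
            - fenchelConj f (deriv f (pη w.1 * q w / pθ w))) := by
          rw [mul_sub, show pθ w * (deriv f (pη w.1 * q w / pθ w) * (pstar w.1 * q w / pθ w))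
              = deriv f (pη w.1 * q w / pθ w) * (pθ w * (pstar w.1 * q w / pθ w)) by ring, hθt]
          ring
      _ ≤ pθ w * f (pstar w.1 * q w / pθ w) := hmul
  rw [← integral_sub hint1 hint2]
  exact integral_mono_ae (hint1.sub hint2) hint3 hae
end

section
/- (Proposition 1, equality part.) Let (X, μ) and (Z, ν) be σ-finite measure spaces, let p* be a probability density on X with p* > 0 μ-a.e., let q be a conditional density on Z given X with q > 0 (μ⊗ν)-a.e., and let p_θ be a probability density on X × Z with p_θ > 0 (μ⊗ν)-a.e. Let f : ℝ → ℝ be convex on [0, ∞) with f(1) = 0, differentiable on (0, ∞), with Fenchel conjugate f*. Assume the relevant integrands are integrable with respect to μ ⊗ ν. Then, taking p_η = p*, the f-GM objective equals the f-VAE objective: ∫ p*(x)·q(x,z)·f'(p*(x)q(x,z)/p_θ(x,z)) d(μ⊗ν) − ∫ p_θ(x,z)·f*(f'(p*(x)q(x,z)/p_θ(x,z))) d(μ⊗ν) = ∫ p_θ(x,z)·f(p*(x)q(x,z)/p_θ(x,z)) d(μ⊗ν). -/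
open MeasureTheory

/-- Equality case of Young's inequality: for a convex `f` differentiable at `t > 0`,
`f*(f'(t)) = t * f'(t) - f t`. -/
lemma fenchelConj_deriv_eq {f : ℝ → ℝ} (hconv : ConvexOn ℝ (Set.Ici (0 : ℝ)) f)
    (hdiff : DifferentiableOn ℝ f (Set.Ioi (0 : ℝ))) {t : ℝ} (ht : 0 < t) :
    fenchelConj f (deriv f t) = t * deriv f t - f t := by
  have hdt : DifferentiableAt ℝ f t :=
    (hdiff t ht).differentiableAt (isOpen_Ioi.mem_nhds ht)
  have hub : ∀ x ≥ (0 : ℝ), deriv f t * x - f x ≤ t * deriv f t - f t := by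
    intro x hx
    rcases lt_trichotomy x t with h | h | h
    · have hs := hconv.slope_le_of_hasDerivAt hx (le_of_lt ht) h hdt.hasDerivAt
      rw [slope_def_field, div_le_iff₀ (by linarith)] at hs
      nlinarith
    · subst h; linarith [mul_comm (deriv f x) x]
    · have hs := hconv.le_slope_of_hasDerivAt (le_of_lt ht) (le_trans ht.le h.le) h hdt.hasDerivAt
      rw [slope_def_field, le_div_iff₀ (by linarith)] at hs
      nlinarith
  refine IsGreatest.csSup_eq ⟨⟨t, ht.le, by ring⟩, ?_⟩
  rintro v ⟨x, hx, rfl⟩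
  exact hub x hx

/-- Proposition 1, equality part: taking the density estimator `p_η = p*`,
the f-GM objective equals the f-VAE objective `D_f(p* ⋉ q ‖ p_θ)`. -/
theorem fGM_eq_fVAE_at_true_density {X Z : Type*} [MeasurableSpace X] [MeasurableSpace Z]
    (μ : Measure X) (ν : Measure Z) [SigmaFinite μ] [SigmaFinite ν]
    (pstar : X → ℝ) (q : X × Z → ℝ) (pθ : X × Z → ℝ) (f : ℝ → ℝ)
    -- p* is a probability density on X, positive μ-a.e.
    (hpstar_meas : Measurable pstar) (hpstar_nonneg : ∀ x, 0 ≤ pstar x)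
    (hpstar_int : ∫ x, pstar x ∂μ = 1)
    (hpstar_pos : ∀ᵐ x ∂μ, 0 < pstar x)
    -- q is a conditional density on Z given X, positive (μ⊗ν)-a.e.
    (hq_meas : Measurable q) (hq_nonneg : ∀ w, 0 ≤ q w)
    (hq_cond : ∀ x, ∫ z, q (x, z) ∂ν = 1)
    (hq_pos : ∀ᵐ w ∂μ.prod ν, 0 < q w)
    -- pθ is a probability density on X × Z, positive (μ⊗ν)-a.e.
    (hpθ_meas : Measurable pθ) (hpθ_nonneg : ∀ w, 0 ≤ pθ w)
    (hpθ_int : ∫ w, pθ w ∂μ.prod ν = 1)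
    (hpθ_pos : ∀ᵐ w ∂μ.prod ν, 0 < pθ w)
    -- f is an f-divergence function, differentiable on (0, ∞)
    (hconv : ConvexOn ℝ (Set.Ici (0 : ℝ)) f) (hf1 : f 1 = 0)
    (hdiff : DifferentiableOn ℝ f (Set.Ioi (0 : ℝ)))
    -- integrability of the relevant integrands
    (hint1 : Integrable
      (fun w : X × Z => pstar w.1 * q w * deriv f (pstar w.1 * q w / pθ w)) (μ.prod ν))
    (hint2 : Integrable
      (fun w : X × Z => pθ w * fenchelConj f (deriv f (pstar w.1 * q w / pθ w))) (μ.prod ν))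
    (hint3 : Integrable
      (fun w : X × Z => pθ w * f (pstar w.1 * q w / pθ w)) (μ.prod ν)) :
    (∫ w : X × Z, pstar w.1 * q w * deriv f (pstar w.1 * q w / pθ w) ∂μ.prod ν)
        - ∫ w : X × Z, pθ w * fenchelConj f (deriv f (pstar w.1 * q w / pθ w)) ∂μ.prod ν
      = ∫ w : X × Z, pθ w * f (pstar w.1 * q w / pθ w) ∂μ.prod ν := by
  rw [← integral_sub hint1 hint2]
  refine integral_congr_ae ?_
  have hps : ∀ᵐ w : X × Z ∂μ.prod ν, 0 < pstar w.1 :=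
    Measure.quasiMeasurePreserving_fst.tendsto_ae.eventually hpstar_pos
  filter_upwards [hps, hq_pos, hpθ_pos] with w hp hq hpθ
  have ht : 0 < pstar w.1 * q w / pθ w := div_pos (mul_pos hp hq) hpθ
  rw [fenchelConj_deriv_eq hconv hdiff ht]
  have : pθ w * (pstar w.1 * q w / pθ w) = pstar w.1 * q w := by
    field_simp
  rw [mul_sub, ← mul_assoc, this]
  ring
end

section
/- (Corollary of Proposition 1: the optimal density estimator is the true density, independently of the other networks.) Under the hypotheses of Proposition 1 (σ-finite spaces (X, μ), (Z, ν); probability density p* on X with p* > 0 μ-a.e.; conditional density q > 0 (μ⊗ν)-a.e.; joint probability density p_θ > 0 (μ⊗ν)-a.e.; f convex on [0, ∞), f(1) = 0, differentiable on (0, ∞); all relevant integrands integrable), for every measurable p_η : X → ℝ with p_η > 0 μ-a.e., writing L^M(p_η) = ∫ p*·q·f'(p_η q/p_θ) d(μ⊗ν) − ∫ p_θ·f*(f'(p_η q/p_θ)) d(μ⊗ν), one has L^M(p_η) ≤ L^M(p*); in particular the maximizing choice p_η = p* does not depend on p_θ or q. -/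
open MeasureTheory

theorem ConvexOn.deriv_mul_sub_le_deriv_mul_sub {S : Set ℝ} {f : ℝ → ℝ} (hf : ConvexOn ℝ S f)
    {r x : ℝ} (hr : r ∈ S) (hx : x ∈ S) (hfr : DifferentiableAt ℝ f r) :
    deriv f r * x - f x ≤ deriv f r * r - f r := by
  rcases lt_trichotomy x r with hxr | rfl | hrx
  · have hslope := hf.slope_le_deriv hx hr hxr hfr
    rw [slope_def_field, div_le_iff₀ (sub_pos.mpr hxr)] at hslope
    linarith
  · exact le_rfl
  · have hslope := hf.deriv_le_slope hr hx hrx hfr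
    rw [slope_def_field, le_div_iff₀ (sub_pos.mpr hrx)] at hslope
    linarith

theorem fenchelConj_deriv {f : ℝ → ℝ} (hf : ConvexOn ℝ (Set.Ici 0) f) {r : ℝ} (hr : 0 ≤ r)
    (hfr : DifferentiableAt ℝ f r) :
    fenchelConj f (deriv f r) = deriv f r * r - f r := by
  refine IsGreatest.csSup_eq ⟨⟨r, hr, rfl⟩, ?_⟩
  rintro v ⟨x, hx, rfl⟩
  exact hf.deriv_mul_sub_le_deriv_mul_sub hr hx hfr

theorem mul_deriv_sub_mul_fenchelConj_le {f : ℝ → ℝ} (hf : ConvexOn ℝ (Set.Ici 0) f)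
    {a s t : ℝ} (ha : 0 ≤ a) (hs : 0 ≤ s) (ht : 0 < t) (hfs : DifferentiableAt ℝ f s) :
    a * deriv f s - t * fenchelConj f (deriv f s) ≤ t * f (a / t) := by
  have hsupport := hf.deriv_mul_sub_le_deriv_mul_sub hs (div_nonneg ha ht.le) hfs
  rw [fenchelConj_deriv hf hs hfs]
  calc a * deriv f s - t * (deriv f s * s - f s)
      = t * (deriv f s * (a / t) - (deriv f s * s - f s)) := by
        linear_combination (-deriv f s) * mul_div_cancel₀ a ht.ne'
    _ ≤ t * f (a / t) := mul_le_mul_of_nonneg_left (by linarith) ht.le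

theorem mul_deriv_sub_mul_fenchelConj_div_self {f : ℝ → ℝ} (hf : ConvexOn ℝ (Set.Ici 0) f)
    {a t : ℝ} (ha : 0 ≤ a) (ht : 0 < t) (hfr : DifferentiableAt ℝ f (a / t)) :
    a * deriv f (a / t) - t * fenchelConj f (deriv f (a / t)) = t * f (a / t) := by
  rw [fenchelConj_deriv hf (div_nonneg ha ht.le) hfr]
  linear_combination (-deriv f (a / t)) * mul_div_cancel₀ a ht.ne'

theorem fGM_maximized_at_true_density_general {X Z : Type*} [MeasurableSpace X] [MeasurableSpace Z]
    (μ : Measure X) (ν : Measure Z)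
    (pstar : X → ℝ) (q : X × Z → ℝ) (pθ : X × Z → ℝ) (f : ℝ → ℝ)
    -- p* is a probability density on X, positive μ-a.e.
    (hpstar_pos : ∀ᵐ x ∂μ, 0 < pstar x)
    -- q is a conditional density on Z given X, positive (μ⊗ν)-a.e.
    (hq_pos : ∀ᵐ w ∂μ.prod ν, 0 < q w)
    -- pθ is a probability density on X × Z, positive (μ⊗ν)-a.e.
    (hpθ_pos : ∀ᵐ w ∂μ.prod ν, 0 < pθ w)
    -- f is an f-divergence function, differentiable on (0, ∞)
    (hconv : ConvexOn ℝ (Set.Ici (0 : ℝ)) f)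
    (hdiff : DifferentiableOn ℝ f (Set.Ioi (0 : ℝ)))
    -- p_η is measurable, positive μ-a.e.
    (pη : X → ℝ) (hpη_pos : ∀ᵐ x ∂μ, 0 < pη x)
    -- integrability of all the relevant integrands
    (hint1 : Integrable
      (fun w : X × Z => pstar w.1 * q w * deriv f (pη w.1 * q w / pθ w)) (μ.prod ν))
    (hint2 : Integrable
      (fun w : X × Z => pθ w * fenchelConj f (deriv f (pη w.1 * q w / pθ w))) (μ.prod ν))
    (hint3 : Integrable
      (fun w : X × Z => pstar w.1 * q w * deriv f (pstar w.1 * q w / pθ w)) (μ.prod ν))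
    (hint4 : Integrable
      (fun w : X × Z => pθ w * fenchelConj f (deriv f (pstar w.1 * q w / pθ w))) (μ.prod ν)) :
    (∫ w : X × Z, pstar w.1 * q w * deriv f (pη w.1 * q w / pθ w) ∂μ.prod ν)
        - ∫ w : X × Z, pθ w * fenchelConj f (deriv f (pη w.1 * q w / pθ w)) ∂μ.prod ν
      ≤ (∫ w : X × Z, pstar w.1 * q w * deriv f (pstar w.1 * q w / pθ w) ∂μ.prod ν)
          - ∫ w : X × Z, pθ w * fenchelConj f (deriv f (pstar w.1 * q w / pθ w)) ∂μ.prod ν := by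
  have hdiffAt : ∀ r, 0 < r → DifferentiableAt ℝ f r := fun r hr =>
    hdiff.differentiableAt (Ioi_mem_nhds hr)
  rw [← integral_sub hint1 hint2, ← integral_sub hint3 hint4]
  refine integral_mono_ae (hint1.sub hint2) (hint3.sub hint4) ?_
  filter_upwards [Measure.quasiMeasurePreserving_fst.ae hpstar_pos,
    Measure.quasiMeasurePreserving_fst.ae hpη_pos, hq_pos, hpθ_pos]
    with w hpstar_w hpη_w hq_w hpθ_w
  have ha : 0 < pstar w.1 * q w := mul_pos hpstar_w hq_w
  have hs : 0 < pη w.1 * q w / pθ w := div_pos (mul_pos hpη_w hq_w) hpθ_w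
  exact (mul_deriv_sub_mul_fenchelConj_le hconv ha.le hs.le hpθ_w (hdiffAt _ hs)).trans_eq
    (mul_deriv_sub_mul_fenchelConj_div_self hconv ha.le hpθ_w
      (hdiffAt _ (div_pos ha hpθ_w))).symm

/-- Corollary of Proposition 1: the optimal density estimator is the true
density, independently of the other networks: for every positive-a.e. measurable `p_η`,
`L^M(p_η) ≤ L^M(p*)`, where
`L^M(p_η) = ∫ p*·q·f'(p_η q/p_θ) d(μ⊗ν) − ∫ p_θ·f*(f'(p_η q/p_θ)) d(μ⊗ν)`.
In particular the maximizing choice `p_η = p*` does not depend on `p_θ` or `q`. -/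
theorem fGM_maximized_at_true_density {X Z : Type*} [MeasurableSpace X] [MeasurableSpace Z]
    (μ : Measure X) (ν : Measure Z) [SigmaFinite μ] [SigmaFinite ν]
    (pstar : X → ℝ) (q : X × Z → ℝ) (pθ : X × Z → ℝ) (f : ℝ → ℝ)
    -- p* is a probability density on X, positive μ-a.e.
    (hpstar_meas : Measurable pstar) (hpstar_nonneg : ∀ x, 0 ≤ pstar x)
    (hpstar_int : ∫ x, pstar x ∂μ = 1)
    (hpstar_pos : ∀ᵐ x ∂μ, 0 < pstar x)
    -- q is a conditional density on Z given X, positive (μ⊗ν)-a.e.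
    (hq_meas : Measurable q) (hq_nonneg : ∀ w, 0 ≤ q w)
    (hq_cond : ∀ x, ∫ z, q (x, z) ∂ν = 1)
    (hq_pos : ∀ᵐ w ∂μ.prod ν, 0 < q w)
    -- pθ is a probability density on X × Z, positive (μ⊗ν)-a.e.
    (hpθ_meas : Measurable pθ) (hpθ_nonneg : ∀ w, 0 ≤ pθ w)
    (hpθ_int : ∫ w, pθ w ∂μ.prod ν = 1)
    (hpθ_pos : ∀ᵐ w ∂μ.prod ν, 0 < pθ w)
    -- f is an f-divergence function, differentiable on (0, ∞)
    (hconv : ConvexOn ℝ (Set.Ici (0 : ℝ)) f) (hf1 : f 1 = 0)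
    (hdiff : DifferentiableOn ℝ f (Set.Ioi (0 : ℝ)))
    -- p_η is measurable, positive μ-a.e.
    (pη : X → ℝ) (hpη_meas : Measurable pη) (hpη_pos : ∀ᵐ x ∂μ, 0 < pη x)
    -- integrability of all the relevant integrands
    (hint1 : Integrable
      (fun w : X × Z => pstar w.1 * q w * deriv f (pη w.1 * q w / pθ w)) (μ.prod ν))
    (hint2 : Integrable
      (fun w : X × Z => pθ w * fenchelConj f (deriv f (pη w.1 * q w / pθ w))) (μ.prod ν))
    (hint3 : Integrable
      (fun w : X × Z => pstar w.1 * q w * deriv f (pstar w.1 * q w / pθ w)) (μ.prod ν))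
    (hint4 : Integrable
      (fun w : X × Z => pθ w * fenchelConj f (deriv f (pstar w.1 * q w / pθ w))) (μ.prod ν))
    (hint5 : Integrable
      (fun w : X × Z => pθ w * f (pstar w.1 * q w / pθ w)) (μ.prod ν)) :
    (∫ w : X × Z, pstar w.1 * q w * deriv f (pη w.1 * q w / pθ w) ∂μ.prod ν)
        - ∫ w : X × Z, pθ w * fenchelConj f (deriv f (pη w.1 * q w / pθ w)) ∂μ.prod ν
      ≤ (∫ w : X × Z, pstar w.1 * q w * deriv f (pstar w.1 * q w / pθ w) ∂μ.prod ν)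
          - ∫ w : X × Z, pθ w * fenchelConj f (deriv f (pstar w.1 * q w / pθ w)) ∂μ.prod ν :=
  fGM_maximized_at_true_density_general μ ν pstar q pθ f hpstar_pos hq_pos hpθ_pos hconv hdiff pη
    hpη_pos hint1 hint2 hint3 hint4
end

section
/- (Proposition 3.) Let (X, μ) and (Z, ν) be σ-finite measure spaces, let p* and p_η be probability densities on X with p* > 0 and p_η > 0 μ-a.e., let q be a conditional density on Z given X with q > 0 (μ⊗ν)-a.e., and let p_θ be a probability density on X × Z with p_θ > 0 (μ⊗ν)-a.e. Assume the functions (x,z) ↦ p*(x)q(x,z)·log(p_η(x)q(x,z)/p_θ(x,z)), (x,z) ↦ p*(x)q(x,z)·log(p*(x)q(x,z)/p_θ(x,z)), and x ↦ p*(x)·log(p*(x)/p_η(x)) are integrable. Then the f-GM objective for f_KL(x) = x·log x, namely L^M = ∫ p*(x)q(x,z)·(log(p_η(x)q(x,z)/p_θ(x,z)) + 1) d(μ⊗ν) − ∫ p_θ(x,z)·(p_η(x)q(x,z)/p_θ(x,z)) d(μ⊗ν), satisfies L^M = ∫ p*(x)q(x,z)·log(p*(x)q(x,z)/p_θ(x,z))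 d(μ⊗ν) − ∫ p*(x)·log(p*(x)/p_η(x)) dμ(x); that is, L^M_{f_KL} = KL(p* ⋉ q ‖ p_θ) − KL(p* ‖ p_η). -/
open MeasureTheory

private lemma prod_density_aux {X Z : Type*} [MeasurableSpace X] [MeasurableSpace Z]
    (μ : Measure X) (ν : Measure Z) [SigmaFinite μ] [SigmaFinite ν]
    (r : X → ℝ) (q : X × Z → ℝ)
    (hr_meas : Measurable r) (hr_nonneg : ∀ x, 0 ≤ r x) (hr_int : ∫ x, r x ∂μ = 1)
    (hq_meas : Measurable q) (hq_nonneg : ∀ w, 0 ≤ q w)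
    (hq_cond : ∀ x, ∫ z, q (x, z) ∂ν = 1) :
    Integrable (fun w : X × Z => r w.1 * q w) (μ.prod ν) ∧
      ∫ w : X × Z, r w.1 * q w ∂μ.prod ν = 1 := by
  have hrI : Integrable r μ := integrable_of_integral_eq_one hr_int
  have hqI : ∀ x, Integrable (fun z => q (x, z)) ν := fun x =>
    integrable_of_integral_eq_one (hq_cond x)
  have hmeas : Measurable (fun w : X × Z => r w.1 * q w) :=
    (hr_meas.comp measurable_fst).mul hq_meas
  have hnn : ∀ w, 0 ≤ r w.1 * q w := fun w => mul_nonneg (hr_nonneg _) (hq_nonneg _)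
  have hlq : ∀ x, ∫⁻ z, ENNReal.ofReal (q (x, z)) ∂ν = 1 := by
    intro x
    rw [← ofReal_integral_eq_lintegral_ofReal (hqI x) (Filter.Eventually.of_forall
      fun z => hq_nonneg _), hq_cond x, ENNReal.ofReal_one]
  have hlr : ∫⁻ x, ENNReal.ofReal (r x) ∂μ = 1 := by
    rw [← ofReal_integral_eq_lintegral_ofReal hrI (Filter.Eventually.of_forall hr_nonneg),
      hr_int, ENNReal.ofReal_one]
  have hlint : ∫⁻ w, ENNReal.ofReal (r w.1 * q w) ∂μ.prod ν = 1 := by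
    rw [MeasureTheory.lintegral_prod _ hmeas.ennreal_ofReal.aemeasurable]
    have : ∀ x, ∫⁻ z, ENNReal.ofReal (r x * q (x, z)) ∂ν = ENNReal.ofReal (r x) := by
      intro x
      calc ∫⁻ z, ENNReal.ofReal (r x * q (x, z)) ∂ν
          = ∫⁻ z, ENNReal.ofReal (r x) * ENNReal.ofReal (q (x, z)) ∂ν := by
            congr 1; ext z; rw [ENNReal.ofReal_mul (hr_nonneg x)]
        _ = ENNReal.ofReal (r x) * ∫⁻ z, ENNReal.ofReal (q (x, z)) ∂ν :=
            lintegral_const_mul _ (hq_meas.comp measurable_prodMk_left).ennreal_ofReal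
        _ = ENNReal.ofReal (r x) := by rw [hlq x, mul_one]
    simp_rw [this]
    exact hlr
  have hInt : Integrable (fun w : X × Z => r w.1 * q w) (μ.prod ν) := by
    refine ⟨hmeas.aestronglyMeasurable, ?_⟩
    rw [hasFiniteIntegral_iff_ofReal (Filter.Eventually.of_forall hnn), hlint]
    exact ENNReal.one_lt_top
  refine ⟨hInt, ?_⟩
  rw [integral_eq_lintegral_of_nonneg_ae (Filter.Eventually.of_forall hnn)
    hmeas.aestronglyMeasurable, hlint]
  simp

/-- Proposition 3: for `f_KL(x) = x·log x` (so `f_KL'(x) = log x + 1` and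
`f_KL*(f_KL'(x)) = x`), the f-GM objective
`L^M = ∫ p* q·(log(p_η q/p_θ) + 1) d(μ⊗ν) − ∫ p_θ·(p_η q/p_θ) d(μ⊗ν)`
decomposes as `L^M = KL(p* ⋉ q ‖ p_θ) − KL(p* ‖ p_η)`. -/
theorem fGM_KL_decomposition {X Z : Type*} [MeasurableSpace X] [MeasurableSpace Z]
    (μ : Measure X) (ν : Measure Z) [SigmaFinite μ] [SigmaFinite ν]
    (pstar : X → ℝ) (pη : X → ℝ) (q : X × Z → ℝ) (pθ : X × Z → ℝ)
    -- p* is a probability density on X, positive μ-a.e.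
    (hpstar_meas : Measurable pstar) (hpstar_nonneg : ∀ x, 0 ≤ pstar x)
    (hpstar_int : ∫ x, pstar x ∂μ = 1)
    (hpstar_pos : ∀ᵐ x ∂μ, 0 < pstar x)
    -- p_η is a probability density on X, positive μ-a.e.
    (hpη_meas : Measurable pη) (hpη_nonneg : ∀ x, 0 ≤ pη x)
    (hpη_int : ∫ x, pη x ∂μ = 1)
    (hpη_pos : ∀ᵐ x ∂μ, 0 < pη x)
    -- q is a conditional density on Z given X, positive (μ⊗ν)-a.e.
    (hq_meas : Measurable q) (hq_nonneg : ∀ w, 0 ≤ q w)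
    (hq_cond : ∀ x, ∫ z, q (x, z) ∂ν = 1)
    (hq_pos : ∀ᵐ w ∂μ.prod ν, 0 < q w)
    -- pθ is a probability density on X × Z, positive (μ⊗ν)-a.e.
    (hpθ_meas : Measurable pθ) (hpθ_nonneg : ∀ w, 0 ≤ pθ w)
    (hpθ_int : ∫ w, pθ w ∂μ.prod ν = 1)
    (hpθ_pos : ∀ᵐ w ∂μ.prod ν, 0 < pθ w)
    -- integrability of the relevant integrands
    (hint1 : Integrable
      (fun w : X × Z => pstar w.1 * q w * Real.log (pη w.1 * q w / pθ w)) (μ.prod ν))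
    (hint2 : Integrable
      (fun w : X × Z => pstar w.1 * q w * Real.log (pstar w.1 * q w / pθ w)) (μ.prod ν))
    (hint3 : Integrable (fun x => pstar x * Real.log (pstar x / pη x)) μ) :
    (∫ w : X × Z, pstar w.1 * q w * (Real.log (pη w.1 * q w / pθ w) + 1) ∂μ.prod ν)
        - ∫ w : X × Z, pθ w * (pη w.1 * q w / pθ w) ∂μ.prod ν
      = (∫ w : X × Z, pstar w.1 * q w * Real.log (pstar w.1 * q w / pθ w) ∂μ.prod ν)
          - ∫ x, pstar x * Real.log (pstar x / pη x) ∂μ := by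
  obtain ⟨hIpq, hpq1⟩ := prod_density_aux μ ν pstar q hpstar_meas hpstar_nonneg hpstar_int
    hq_meas hq_nonneg hq_cond
  obtain ⟨hIηq, hηq1⟩ := prod_density_aux μ ν pη q hpη_meas hpη_nonneg hpη_int
    hq_meas hq_nonneg hq_cond
  -- lift a.e. positivity to the product
  have hpstar_pos' : ∀ᵐ w ∂μ.prod ν, 0 < pstar w.1 :=
    (Measure.quasiMeasurePreserving_fst (μ := μ) (ν := ν)).ae hpstar_pos
  have hpη_pos' : ∀ᵐ w ∂μ.prod ν, 0 < pη w.1 :=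
    (Measure.quasiMeasurePreserving_fst (μ := μ) (ν := ν)).ae hpη_pos
  -- second integral on LHS equals 1
  have hsecond : ∫ w : X × Z, pθ w * (pη w.1 * q w / pθ w) ∂μ.prod ν = 1 := by
    rw [show (1 : ℝ) = ∫ w : X × Z, pη w.1 * q w ∂μ.prod ν from hηq1.symm]
    refine integral_congr_ae ?_
    filter_upwards [hpθ_pos] with w hw
    field_simp
  -- first integral on LHS splits
  have hfirst : (∫ w : X × Z, pstar w.1 * q w * (Real.log (pη w.1 * q w / pθ w) + 1) ∂μ.prod ν)
      = (∫ w : X × Z, pstar w.1 * q w * Real.log (pη w.1 * q w / pθ w) ∂μ.prod ν) + 1 := by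
    simp_rw [mul_add, mul_one]
    rw [integral_add hint1 hIpq, hpq1]
  -- the key a.e. identity
  have hkey : (fun w : X × Z => pstar w.1 * q w * Real.log (pstar w.1 * q w / pθ w)
        - pstar w.1 * q w * Real.log (pη w.1 * q w / pθ w))
      =ᵐ[μ.prod ν] fun w => pstar w.1 * q w * Real.log (pstar w.1 / pη w.1) := by
    filter_upwards [hpstar_pos', hpη_pos', hq_pos, hpθ_pos] with w h1 h2 h3 h4
    have : pstar w.1 * q w / pθ w = (pstar w.1 / pη w.1) * (pη w.1 * q w / pθ w) := by
      field_simp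
    rw [← mul_sub, this, Real.log_mul (by positivity) (by positivity)]
    ring
  have hIg : Integrable (fun w : X × Z => pstar w.1 * q w * Real.log (pstar w.1 / pη w.1))
      (μ.prod ν) := (hint2.sub hint1).congr hkey
  have hg : ∫ w : X × Z, pstar w.1 * q w * Real.log (pstar w.1 / pη w.1) ∂μ.prod ν
      = ∫ x, pstar x * Real.log (pstar x / pη x) ∂μ := by
    rw [MeasureTheory.integral_prod _ hIg]
    congr 1
    ext x
    calc ∫ z, pstar x * q (x, z) * Real.log (pstar x / pη x) ∂ν
        = ∫ z, (pstar x * Real.log (pstar x / pη x)) * q (x, z) ∂ν := by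
          congr 1; ext z; ring
      _ = (pstar x * Real.log (pstar x / pη x)) * ∫ z, q (x, z) ∂ν := integral_const_mul _ _
      _ = pstar x * Real.log (pstar x / pη x) := by rw [hq_cond x, mul_one]
  have hdiff : (∫ w : X × Z, pstar w.1 * q w * Real.log (pstar w.1 * q w / pθ w) ∂μ.prod ν)
      - (∫ w : X × Z, pstar w.1 * q w * Real.log (pη w.1 * q w / pθ w) ∂μ.prod ν)
      = ∫ x, pstar x * Real.log (pstar x / pη x) ∂μ := by
    rw [← integral_sub hint2 hint1, ← hg]
    exact integral_congr_ae hkey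
  rw [hfirst, hsecond]
  linarith [hdiff]
end

section
/- (Variational lower bound of the f-GAN objective.) Let (X, μ) be a σ-finite measure space, let f : ℝ → ℝ be convex on [0, ∞) with f(1) = 0 and Fenchel conjugate f*(u) = sup_{x ≥ 0} (u·x − f(x)), and let p and r be probability densities on X with r > 0 μ-a.e. Let T : X → ℝ be any measurable function such that f*(T(x)) < ∞ for all x and such that x ↦ p(x)·T(x), x ↦ r(x)·f*(T(x)), and x ↦ r(x)·f(p(x)/r(x)) are μ-integrable. Then ∫ p(x)·T(x) dμ(x) − ∫ r(x)·f*(T(x)) dμ(x) ≤ ∫ r(x)·f(p(x)/r(x)) dμ(x) = D_f(p‖r). -/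
open MeasureTheory

/-- Variational lower bound of the f-GAN objective: for any measurable
discriminator `T` with `f*(T(x)) < ∞` for all `x` (expressed as boundedness above of the set
defining the supremum `f*(T(x))`), `∫ p·T dμ − ∫ r·f*(T) dμ ≤ ∫ r·f(p/r) dμ = D_f(p‖r)`. -/
theorem fGAN_variational_bound {X : Type*} [MeasurableSpace X]
    (μ : Measure X) [SigmaFinite μ]
    (f : ℝ → ℝ) (hconv : ConvexOn ℝ (Set.Ici (0 : ℝ)) f) (hf1 : f 1 = 0)
    (p r : X → ℝ) (T : X → ℝ)
    -- p is a probability density on X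
    (hp_meas : Measurable p) (hp_nonneg : ∀ x, 0 ≤ p x) (hp_int : ∫ x, p x ∂μ = 1)
    -- r is a probability density on X, positive μ-a.e.
    (hr_meas : Measurable r) (hr_nonneg : ∀ x, 0 ≤ r x) (hr_int : ∫ x, r x ∂μ = 1)
    (hr_pos : ∀ᵐ x ∂μ, 0 < r x)
    -- T is measurable with f*(T(x)) < ∞ for all x
    (hT_meas : Measurable T)
    (hT_fin : ∀ x, BddAbove {v : ℝ | ∃ t ≥ (0 : ℝ), v = T x * t - f t})
    -- integrability of the relevant integrands
    (hint1 : Integrable (fun x => p x * T x) μ)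
    (hint2 : Integrable (fun x => r x * fenchelConj f (T x)) μ)
    (hint3 : Integrable (fun x => r x * f (p x / r x)) μ) :
    (∫ x, p x * T x ∂μ) - ∫ x, r x * fenchelConj f (T x) ∂μ
      ≤ ∫ x, r x * f (p x / r x) ∂μ := by
  rw [← integral_sub hint1 hint2]
  refine integral_mono_ae (hint1.sub hint2) hint3 ?_
  filter_upwards [hr_pos] with x hrx
  have ht : (0 : ℝ) ≤ p x / r x := div_nonneg (hp_nonneg x) hrx.le
  have hle : T x * (p x / r x) - f (p x / r x) ≤ fenchelConj f (T x) :=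
    le_csSup (hT_fin x) ⟨p x / r x, ht, rfl⟩
  have h2 : r x * (T x * (p x / r x) - f (p x / r x)) ≤ r x * fenchelConj f (T x) :=
    mul_le_mul_of_nonneg_left hle hrx.le
  have h3 : r x * (p x / r x) = p x := mul_div_cancel₀ _ hrx.ne'
  have h4 : r x * (T x * (p x / r x)) = p x * T x := by
    rw [← mul_assoc, mul_comm (r x) (T x), mul_assoc, h3]; ring
  rw [mul_sub, h4] at h2
  linarith
end

section
/- (Tightness of the f-GAN variational bound at the optimal discriminator T = f'(p/r).) Let (X, μ) be a σ-finite measure space, let f : ℝ → ℝ be convex on [0, ∞) with f(1) = 0, differentiable on (0, ∞), with Fenchel conjugate f*, and let p and r be probability densities on X with p > 0 and r > 0 μ-a.e. Assume x ↦ p(x)·f'(p(x)/r(x)), x ↦ r(x)·f*(f'(p(x)/r(x))), and x ↦ r(x)·f(p(x)/r(x)) are μ-integrable. Then ∫ p(x)·f'(p(x)/r(x)) dμ(x) − ∫ r(x)·f*(f'(p(x)/r(x))) dμ(x) = ∫ r(x)·f(p(x)/r(x)) dμ(x) = D_f(p‖r). -/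
open MeasureTheory

/-- Tangent line inequality for a convex function on `[0, ∞)`. -/
lemma tangent_le_aux {f : ℝ → ℝ} (hconv : ConvexOn ℝ (Set.Ici (0 : ℝ)) f)
    (hdiff : DifferentiableOn ℝ f (Set.Ioi (0 : ℝ)))
    {t : ℝ} (ht : 0 < t) {x : ℝ} (hx : 0 ≤ x) :
    deriv f t * x - f x ≤ deriv f t * t - f t := by
  have hdt : DifferentiableAt ℝ f t :=
    (hdiff t ht).differentiableAt (Ioi_mem_nhds ht)
  rcases lt_trichotomy x t with h | h | h
  · have := hconv.slope_le_deriv (Set.mem_Ici.2 hx) (Set.mem_Ici.2 ht.le) h hdt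
    rw [slope_def_field, div_le_iff₀ (by linarith)] at this
    nlinarith
  · simp [h]
  · have := hconv.deriv_le_slope (Set.mem_Ici.2 ht.le) (Set.mem_Ici.2 hx) h hdt
    rw [slope_def_field, le_div_iff₀ (by linarith)] at this
    nlinarith

/-- The Fenchel conjugate is attained at the point of differentiability. -/
lemma fenchel_at_deriv_aux {f : ℝ → ℝ} (hconv : ConvexOn ℝ (Set.Ici (0 : ℝ)) f)
    (hdiff : DifferentiableOn ℝ f (Set.Ioi (0 : ℝ)))
    {t : ℝ} (ht : 0 < t) :
    fenchelConj f (deriv f t) = deriv f t * t - f t := by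
  have hmem : (deriv f t * t - f t) ∈
      {v : ℝ | ∃ x ≥ (0 : ℝ), v = deriv f t * x - f x} := ⟨t, ht.le, rfl⟩
  have hub : ∀ v ∈ {v : ℝ | ∃ x ≥ (0 : ℝ), v = deriv f t * x - f x},
      v ≤ deriv f t * t - f t := by
    rintro v ⟨x, hx, rfl⟩
    exact tangent_le_aux hconv hdiff ht hx
  exact le_antisymm (csSup_le ⟨_, hmem⟩ hub)
    (le_csSup ⟨_, hub⟩ hmem)

/-- Tightness of the f-GAN variational bound at the optimal discriminator
`T = f'(p/r)`: `∫ p·f'(p/r) dμ − ∫ r·f*(f'(p/r)) dμ = ∫ r·f(p/r) dμ = D_f(p‖r)`. -/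
theorem fGAN_bound_tight {X : Type*} [MeasurableSpace X]
    (μ : Measure X) [SigmaFinite μ]
    (f : ℝ → ℝ) (hconv : ConvexOn ℝ (Set.Ici (0 : ℝ)) f) (hf1 : f 1 = 0)
    (hdiff : DifferentiableOn ℝ f (Set.Ioi (0 : ℝ)))
    (p r : X → ℝ)
    -- p is a probability density on X, positive μ-a.e.
    (hp_meas : Measurable p) (hp_nonneg : ∀ x, 0 ≤ p x) (hp_int : ∫ x, p x ∂μ = 1)
    (hp_pos : ∀ᵐ x ∂μ, 0 < p x)
    -- r is a probability density on X, positive μ-a.e.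
    (hr_meas : Measurable r) (hr_nonneg : ∀ x, 0 ≤ r x) (hr_int : ∫ x, r x ∂μ = 1)
    (hr_pos : ∀ᵐ x ∂μ, 0 < r x)
    -- integrability of the relevant integrands
    (hint1 : Integrable (fun x => p x * deriv f (p x / r x)) μ)
    (hint2 : Integrable (fun x => r x * fenchelConj f (deriv f (p x / r x))) μ)
    (hint3 : Integrable (fun x => r x * f (p x / r x)) μ) :
    (∫ x, p x * deriv f (p x / r x) ∂μ)
        - ∫ x, r x * fenchelConj f (deriv f (p x / r x)) ∂μ
      = ∫ x, r x * f (p x / r x) ∂μ := by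
  rw [← integral_sub hint1 hint2]
  apply integral_congr_ae
  filter_upwards [hp_pos, hr_pos] with x hpx hrx
  have ht : 0 < p x / r x := div_pos hpx hrx
  rw [fenchel_at_deriv_aux hconv hdiff ht]
  field_simp
  ring
end

section
/- (Proposition 4: f-GM reduces to f-GAN at the optimal variational network.) Let (X, μ) and (Z, ν) be σ-finite measure spaces, let p* be a probability density on X, let p_θ be a probability density on X × Z with p_θ > 0 (μ⊗ν)-a.e., let p_θ^X(x) = ∫ p_θ(x,z) dν(z) denote its marginal and assume p_θ^X > 0 μ-a.e., and let p_η : X → ℝ be measurable with p_η > 0 μ-a.e. Let f : ℝ → ℝ be convex on [0, ∞) with f(1) = 0, differentiable on (0, ∞), with Fenchel conjugate f*. Define the posterior conditional density q*(x,z) = p_θ(x,z)/p_θ^X(x). Then, assuming the relevant integrands are integrable, ∫ p*(x)·q*(x,z)·f'(p_η(x)q*(x,z)/p_θ(x,z)) d(μ⊗ν) − ∫ p_θ(x,z)·f*(f'(p_η(x)q*(x,z)/p_θ(x,z))) d(μ⊗ν) = ∫ p*(x)·f'(p_η(x)/p_θ^X(x)) dμ(x) − ∫ p_θ^X(x)·f*(f'(p_η(x)/p_θ^X(x)))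 dμ(x); that is, L^M_f(θ, φ*, η) = L^G_f(θ, η) with discriminator T(x) = f'(p_η(x)/p_θ^X(x)). -/
open MeasureTheory

/-- Proposition 4: f-GM reduces to f-GAN at the optimal variational network.
With the posterior conditional density `q*(x,z) = p_θ(x,z)/p_θ^X(x)`, the f-GM objective
equals the f-GAN objective with discriminator `T(x) = f'(p_η(x)/p_θ^X(x))`:
`L^M_f(θ, φ*, η) = L^G_f(θ, η)`. -/
theorem fGM_reduces_to_fGAN {X Z : Type*} [MeasurableSpace X] [MeasurableSpace Z]
    (μ : Measure X) (ν : Measure Z) [SigmaFinite μ] [SigmaFinite ν]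
    (pstar : X → ℝ) (pθ : X × Z → ℝ) (pθX : X → ℝ) (qstar : X × Z → ℝ)
    (pη : X → ℝ) (f : ℝ → ℝ)
    -- p* is a probability density on X
    (hpstar_meas : Measurable pstar) (hpstar_nonneg : ∀ x, 0 ≤ pstar x)
    (hpstar_int : ∫ x, pstar x ∂μ = 1)
    -- pθ is a probability density on X × Z, positive (μ⊗ν)-a.e.
    (hpθ_meas : Measurable pθ) (hpθ_nonneg : ∀ w, 0 ≤ pθ w)
    (hpθ_int : ∫ w, pθ w ∂μ.prod ν = 1)
    (hpθ_pos : ∀ᵐ w ∂μ.prod ν, 0 < pθ w)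
    -- pθX is the marginal of pθ over X, positive μ-a.e.
    (hpθX : ∀ x, pθX x = ∫ z, pθ (x, z) ∂ν)
    (hpθX_pos : ∀ᵐ x ∂μ, 0 < pθX x)
    -- pη is measurable, positive μ-a.e.
    (hpη_meas : Measurable pη) (hpη_pos : ∀ᵐ x ∂μ, 0 < pη x)
    -- f is an f-divergence function, differentiable on (0, ∞)
    (hconv : ConvexOn ℝ (Set.Ici (0 : ℝ)) f) (hf1 : f 1 = 0)
    (hdiff : DifferentiableOn ℝ f (Set.Ioi (0 : ℝ)))
    -- q* is the posterior conditional density of the generative model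
    (hqstar : ∀ w : X × Z, qstar w = pθ w / pθX w.1)
    -- integrability of the relevant integrands
    (hint1 : Integrable
      (fun w : X × Z =>
        pstar w.1 * qstar w * deriv f (pη w.1 * qstar w / pθ w)) (μ.prod ν))
    (hint2 : Integrable
      (fun w : X × Z =>
        pθ w * fenchelConj f (deriv f (pη w.1 * qstar w / pθ w))) (μ.prod ν))
    (hint3 : Integrable (fun x => pstar x * deriv f (pη x / pθX x)) μ)
    (hint4 : Integrable (fun x => pθX x * fenchelConj f (deriv f (pη x / pθX x))) μ) :
    (∫ w : X × Z, pstar w.1 * qstar w * deriv f (pη w.1 * qstar w / pθ w) ∂μ.prod ν)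
        - ∫ w : X × Z, pθ w * fenchelConj f (deriv f (pη w.1 * qstar w / pθ w)) ∂μ.prod ν
      = (∫ x, pstar x * deriv f (pη x / pθX x) ∂μ)
          - ∫ x, pθX x * fenchelConj f (deriv f (pη x / pθX x)) ∂μ := by
  classical
  set g : X → ℝ := fun x => deriv f (pη x / pθX x) with hg
  set h : X → ℝ := fun x => fenchelConj f (g x) with hh
  -- a.e. positivity of pθX on the product
  have hfst : ∀ᵐ w ∂μ.prod ν, 0 < pθX w.1 :=
    (MeasureTheory.Measure.quasiMeasurePreserving_fst).ae hpθX_pos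
  -- rewrite the key ratio a.e.
  have hratio : ∀ᵐ w ∂μ.prod ν,
      pη w.1 * qstar w / pθ w = pη w.1 / pθX w.1 := by
    filter_upwards [hpθ_pos, hfst] with w h1 h2
    rw [hqstar w]
    field_simp
  have E1 : (fun w : X × Z => pstar w.1 * qstar w * deriv f (pη w.1 * qstar w / pθ w))
      =ᵐ[μ.prod ν] fun w => pθ w * (pstar w.1 * g w.1 / pθX w.1) := by
    filter_upwards [hpθ_pos, hfst, hratio] with w h1 h2 h3
    rw [h3, hqstar w]
    field_simp [hg]
    ring
  have E2 : (fun w : X × Z => pθ w * fenchelConj f (deriv f (pη w.1 * qstar w / pθ w)))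
      =ᵐ[μ.prod ν] fun w => pθ w * h w.1 := by
    filter_upwards [hratio] with w h3
    rw [h3]
  have I1 : Integrable (fun w : X × Z => pθ w * (pstar w.1 * g w.1 / pθX w.1)) (μ.prod ν) :=
    hint1.congr E1
  have I2 : Integrable (fun w : X × Z => pθ w * h w.1) (μ.prod ν) := hint2.congr E2
  have hA : (∫ w : X × Z, pstar w.1 * qstar w * deriv f (pη w.1 * qstar w / pθ w) ∂μ.prod ν)
      = ∫ x, pstar x * g x ∂μ := by
    rw [integral_congr_ae E1, MeasureTheory.integral_prod _ I1]
    refine integral_congr_ae ?_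
    filter_upwards [hpθX_pos] with x hx
    show (∫ z, pθ (x, z) * (pstar x * g x / pθX x) ∂ν) = pstar x * g x
    rw [integral_mul_const, ← hpθX x]
    field_simp
  have hB : (∫ w : X × Z, pθ w * fenchelConj f (deriv f (pη w.1 * qstar w / pθ w)) ∂μ.prod ν)
      = ∫ x, pθX x * h x ∂μ := by
    rw [integral_congr_ae E2, MeasureTheory.integral_prod _ I2]
    refine integral_congr_ae (Filter.Eventually.of_forall fun x => ?_)
    show (∫ z, pθ (x, z) * h x ∂ν) = pθX x * h x
    rw [integral_mul_const, ← hpθX x]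
  rw [hA, hB]
end
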